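/- arXiv:2105.10348 — 3 statements merged into one kernel-verified Lean document; each statement's English description precedes it below -/
import Mathlib

section
/- Let M > 0. Let Ψ^∞ be a function on {W : Im W > M} with Ψ^∞(W) − W → c_0^∞ as Im W → +∞, and let Ψ^0 be a function on {W : Im W < −M} with Ψ^0(W) − W → c_0^0 as Im W → −∞, for some constants c_0^∞, c_0^0 ∈ ℂ. Suppose the functional equation Ψ^∞(conj(W) + 1/2) = conj(Ψ^0(W)) + 1/2 holds for all W with Im W < −M. Then c_0^∞ = conj(c_0^0). Consequently, if in addition c_0^∞ − c_0^0 = −2πib for some b ∈ ℝ, then Im(c_0^∞) = −πb. -/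
/-! Along `Im W → −∞` the point `conj W + 1/2` goes to `Im → +∞`, so composing the asymptotics of
`Ψ^∞` with this map and using the functional equation shows that `conj (Ψ⁰ W − W)` tends to both
`c₀^∞` and `conj c₀⁰`. The second claim is the imaginary part of `c₀^∞ − conj c₀^∞ = −2πib`. -/

open Complex ComplexConjugate Filter

namespace Complex

instance neBot_comap_im_atBot : (comap im atBot).NeBot :=
  NeBot.comap_of_surj atBot_neBot im_surjective

theorem tendsto_conj_add_const_comap_im_atBot (c : ℂ) :
    Tendsto (fun W => conj W + c) (comap im atBot) (comap im atTop) := by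
  refine tendsto_comap_iff.mpr ?_
  have him : im ∘ (fun W => conj W + c) = fun W => -W.im + c.im := by
    funext W; simp
  rw [him]
  exact tendsto_atTop_add_const_right _ _ (tendsto_neg_atBot_atTop.comp tendsto_comap)

theorem eventually_im_lt_comap_im_atBot (M : ℝ) : ∀ᶠ W in comap im atBot, W.im < M :=
  tendsto_comap.eventually (eventually_lt_atBot M)

theorem im_eq_neg_pi_mul_of_sub_conj_eq {c : ℂ} {b : ℝ}
    (h : c - conj c = -(2 * (Real.pi : ℂ) * I * (b : ℂ))) : c.im = -(Real.pi * b) := by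
  have him := congrArg im h
  simp only [sub_conj, mul_im, ofReal_re, ofReal_im, I_re, I_im, neg_im] at him
  norm_num at him
  linarith

end Complex

theorem constant_terms_conjugate_general (M : ℝ) (Ψinf Ψ0 : ℂ → ℂ)
    (c0inf c00 : ℂ)
    (hinf : Tendsto (fun W : ℂ => Ψinf W - W) (comap Complex.im atTop) (nhds c0inf))
    (h0 : Tendsto (fun W : ℂ => Ψ0 W - W) (comap Complex.im atBot) (nhds c00))
    (heq : ∀ W : ℂ, W.im < -M →
      Ψinf ((starRingEnd ℂ) W + 1 / 2) = (starRingEnd ℂ) (Ψ0 W) + 1 / 2) :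
    c0inf = (starRingEnd ℂ) c00 ∧
    (∀ b : ℝ, c0inf - c00 = -(2 * (Real.pi : ℂ) * Complex.I * (b : ℂ)) →
      c0inf.im = -(Real.pi * b)) := by
  have hinf' : Tendsto (fun W => Ψinf (conj W + 1 / 2) - (conj W + 1 / 2))
      (comap im atBot) (nhds c0inf) :=
    hinf.comp (tendsto_conj_add_const_comap_im_atBot _)
  have h0' : Tendsto (fun W => conj (Ψ0 W - W)) (comap im atBot) (nhds (conj c00)) :=
    (continuous_conj.tendsto c00).comp h0
  have hcompat : (fun W => Ψinf (conj W + 1 / 2) - (conj W + 1 / 2))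
      =ᶠ[comap im atBot] fun W => conj (Ψ0 W - W) := by
    filter_upwards [eventually_im_lt_comap_im_atBot (-M)] with W hW
    rw [heq W hW, map_sub]
    ring
  have key : c0inf = conj c00 := tendsto_nhds_unique (hinf'.congr' hcompat) h0'
  refine ⟨key, fun b hb => im_eq_neg_pi_mul_of_sub_conj_eq ?_⟩
  rw [key] at hb ⊢
  rwa [conj_conj]

/-- If `Ψ^∞(W) − W → c₀^∞` as `Im W → +∞`, `Ψ⁰(W) − W → c₀⁰` as `Im W → −∞`, and the
compatibility equation `Ψ^∞(conj W + 1/2) = conj (Ψ⁰ W) + 1/2` holds for `Im W < −M`,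
then `c₀^∞ = conj c₀⁰`; consequently, if moreover `c₀^∞ − c₀⁰ = −2πib` with `b` real,
then `Im c₀^∞ = −πb`. -/
theorem constant_terms_conjugate (M : ℝ) (hM : 0 < M) (Ψinf Ψ0 : ℂ → ℂ)
    (c0inf c00 : ℂ)
    (hinf : Tendsto (fun W : ℂ => Ψinf W - W) (comap Complex.im atTop) (nhds c0inf))
    (h0 : Tendsto (fun W : ℂ => Ψ0 W - W) (comap Complex.im atBot) (nhds c00))
    (heq : ∀ W : ℂ, W.im < -M →
      Ψinf ((starRingEnd ℂ) W + 1 / 2) = (starRingEnd ℂ) (Ψ0 W) + 1 / 2) :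
    c0inf = (starRingEnd ℂ) c00 ∧
    (∀ b : ℝ, c0inf - c00 = -(2 * (Real.pi : ℂ) * Complex.I * (b : ℂ)) →
      c0inf.im = -(Real.pi * b)) :=
  constant_terms_conjugate_general M Ψinf Ψ0 c0inf c00 hinf h0 heq
end

section
/- Let b ∈ ℝ and ε > 0, and set α^± := ±iπ/√ε + iπb. Let Ψ be a holomorphic function on a horizontal strip S ⊆ ℂ admitting an absolutely convergent expansion Ψ(W) = W + c_0 + Σ_{n ∈ ℤ, n≠0} c_n e^{2πinW} on S, and define Ψ^U := Ψ and Ψ^L := T_{α^−} ∘ Ψ ∘ T_{α^+}, i.e. Ψ^L(W) = α^− + Ψ(W + α^+). Suppose the functional equation Ψ^U(conj(W) + 1/2) = conj(Ψ^L(W)) + 1/2 holds for all W in some nonempty open set on which both sides are defined (i.e. W + α^+ ∈ S and conj(W) + 1/2 ∈ S). Then the constant term satisfies Im(c_0) = −πb. -/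
/-!
Both sides of the compatibility equation are holomorphic in `w = conj W` (the right side is a
conjugate of a holomorphic function evaluated at a conjugate point), so by the identity theorem
the equation holds on the whole horizontal strip where both sides are defined, in particular
along the full horizontal line through a point `conj W₀` of the open set. With
`z₁ = conj W₀ + 1/2` and `z₂ = W₀ + α⁺` it reads
`Ψ(z₁ + t) - (z₁ + t) = conj (Ψ(z₂ + t) - (z₂ + t)) + conj (α⁺ + α⁻)` for real `t`; averaging
over one period `t ∈ [0, 1]` kills every nonconstant Fourier mode and leaves
`c₀ = conj c₀ - 2πib`, whose imaginary part is the claim.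
-/

open Complex Set Filter Topology MeasureTheory ComplexConjugate
open scoped Real

lemma integral_exp_two_pi_I_int_mul (n : ℤ) :
    ∫ t in (0 : ℝ)..1, exp (2 * π * I * n * t) = if n = 0 then 1 else 0 := by
  split_ifs with hn
  · simp [hn]
  · have hk : 2 * π * I * n ≠ 0 := by simp [hn, Real.pi_ne_zero, I_ne_zero]
    have hper : exp (2 * π * I * n) = 1 := by
      rw [show 2 * π * I * n = n * (2 * π * I) by ring]
      exact exp_int_mul_two_pi_mul_I n
    rw [integral_exp_mul_complex hk]
    simp [hper]

lemma norm_exp_two_pi_I_int_mul_add_ofReal (n : ℤ) (z : ℂ) (t : ℝ) :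
    ‖exp (2 * π * I * n * (z + t))‖ = ‖exp (2 * π * I * n * z)‖ := by
  rw [mul_add, exp_add, norm_mul, show 2 * π * I * n * t = ((2 * π * n * t : ℝ) : ℂ) * I by
    push_cast; ring, norm_exp_ofReal_mul_I, mul_one]

section FourierLine

variable {c : ℤ → ℂ} {g : ℝ → ℂ} {z : ℂ}

lemma summable_norm_of_hasSum_fourier_line
    (h : ∀ t : ℝ, HasSum (fun n : ℤ => c n * exp (2 * π * I * n * (z + t))) (g t)) :
    Summable fun n : ℤ => ‖c n * exp (2 * π * I * n * z)‖ := by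
  -- in the finite-dimensional space `ℂ` unconditional summability is absolute
  simpa using (h 0).summable.norm

lemma continuous_of_hasSum_fourier_line
    (h : ∀ t : ℝ, HasSum (fun n : ℤ => c n * exp (2 * π * I * n * (z + t))) (g t)) :
    Continuous g := by
  have hg : g = fun t : ℝ => ∑' n : ℤ, c n * exp (2 * π * I * n * (z + t)) :=
    funext fun t => (h t).tsum_eq.symm
  rw [hg]
  refine continuous_tsum (fun n => by fun_prop) (summable_norm_of_hasSum_fourier_line h)
    fun n t => ?_
  rw [norm_mul, norm_mul, norm_exp_two_pi_I_int_mul_add_ofReal]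

lemma intervalIntegral_eq_coeff_zero_of_hasSum_fourier_line
    (h : ∀ t : ℝ, HasSum (fun n : ℤ => c n * exp (2 * π * I * n * (z + t))) (g t)) :
    ∫ t in (0 : ℝ)..1, g t = c 0 := by
  have hterm : ∀ n : ℤ, ∫ t in (0 : ℝ)..1, c n * exp (2 * π * I * n * (z + t)) =
      if n = 0 then c 0 else 0 := by
    intro n
    simp_rw [mul_add, exp_add, ← mul_assoc, intervalIntegral.integral_const_mul,
      integral_exp_two_pi_I_int_mul]
    split_ifs with hn <;> simp [hn]
  have hint := intervalIntegral.hasSum_integral_of_dominated_convergence (μ := volume) (a := 0)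
    (b := 1) (fun n _ => ‖c n * exp (2 * π * I * n * z)‖)
    (fun n => (by fun_prop : Continuous _).aestronglyMeasurable)
    (fun n => ae_of_all _ fun t _ => by
      rw [norm_mul, norm_mul, norm_exp_two_pi_I_int_mul_add_ofReal])
    (ae_of_all _ fun _ _ => summable_norm_of_hasSum_fourier_line h) intervalIntegrable_const
    (ae_of_all _ fun t _ => h t)
  simp only [hterm] at hint
  exact hint.unique (hasSum_ite_eq 0 (c 0))

end FourierLine

lemma differentiableAt_conj_comp_conj_add {f : ℂ → ℂ} {α w : ℂ}
    (hf : DifferentiableAt ℂ f (conj w + α)) :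
    DifferentiableAt ℂ (fun w => conj (f (conj w + α))) w := by
  have h : DifferentiableAt ℂ (conj ∘ f ∘ conj) (w + conj α) := by
    simpa using hf.conj_conj
  exact h.comp w (differentiableAt_id.add_const _) |>.congr_of_eventuallyEq
    (Eventually.of_forall fun v => by simp)

lemma mem_im_preimage_add_ofReal {s : Set ℝ} {z : ℂ} (t : ℝ) (hz : z ∈ im ⁻¹' s) :
    z + t ∈ im ⁻¹' s := by
  simpa using hz

lemma mem_reflection_domain_iff {a₁ a₂ : ℝ} {α w : ℂ} :
    w ∈ im ⁻¹' (Ioo a₁ a₂ ∩ Ioo (α.im - a₂) (α.im - a₁)) ↔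
      w + 1 / 2 ∈ im ⁻¹' Ioo a₁ a₂ ∧ conj w + α ∈ im ⁻¹' Ioo a₁ a₂ := by
  simp only [mem_preimage, mem_inter_iff, mem_Ioo, add_im, conj_im, div_ofNat_im, one_im]
  constructor <;> rintro ⟨⟨_, _⟩, _, _⟩ <;> refine ⟨⟨?_, ?_⟩, ?_, ?_⟩ <;> linarith

lemma conj_mem_reflection_domain {a₁ a₂ : ℝ} {α W : ℂ}
    (h : W + α ∈ im ⁻¹' Ioo a₁ a₂ ∧ conj W + 1 / 2 ∈ im ⁻¹' Ioo a₁ a₂) :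
    conj W ∈ im ⁻¹' (Ioo a₁ a₂ ∩ Ioo (α.im - a₂) (α.im - a₁)) :=
  mem_reflection_domain_iff.2 ⟨h.2, by rw [conj_conj]; exact h.1⟩

lemma reflection_eq_of_eqOn_open {Ψ : ℂ → ℂ} {a₁ a₂ : ℝ}
    (hΨ : DifferentiableOn ℂ Ψ (im ⁻¹' Ioo a₁ a₂)) {α β W₀ : ℂ} {O : Set ℂ} (hO : IsOpen O)
    (hW₀ : W₀ ∈ O)
    (hdom : ∀ W ∈ O, W + α ∈ im ⁻¹' Ioo a₁ a₂ ∧ conj W + 1 / 2 ∈ im ⁻¹' Ioo a₁ a₂)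
    (heq : ∀ W ∈ O, Ψ (conj W + 1 / 2) = conj (β + Ψ (W + α)) + 1 / 2) :
    ∀ w ∈ im ⁻¹' (Ioo a₁ a₂ ∩ Ioo (α.im - a₂) (α.im - a₁)),
      Ψ (w + 1 / 2) = conj (β + Ψ (conj w + α)) + 1 / 2 := by
  set U := im ⁻¹' (Ioo a₁ a₂ ∩ Ioo (α.im - a₂) (α.im - a₁))
  have hstrip : IsOpen (im ⁻¹' Ioo a₁ a₂) := isOpen_Ioo.preimage continuous_im
  have hU : IsOpen U := (isOpen_Ioo.inter isOpen_Ioo).preimage continuous_im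
  have hUconn : IsPreconnected U :=
    (((convex_Ioo _ _).inter (convex_Ioo _ _)).linear_preimage imLm).isPreconnected
  have hlhs : DifferentiableOn ℂ (fun w => Ψ (w + 1 / 2)) U := fun w hw =>
    ((hΨ.differentiableAt (hstrip.mem_nhds (mem_reflection_domain_iff.1 hw).1)).comp w
      (differentiableAt_id.add_const _)).differentiableWithinAt
  have hrhs : DifferentiableOn ℂ (fun w => conj (β + Ψ (conj w + α)) + 1 / 2) U := fun w hw => by
    have hΨw := hΨ.differentiableAt (hstrip.mem_nhds (mem_reflection_domain_iff.1 hw).2)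
    simp only [map_add]
    exact (((differentiableAt_conj_comp_conj_add hΨw).const_add _).add_const _)
      |>.differentiableWithinAt
  have hloc : (fun w => Ψ (w + 1 / 2)) =ᶠ[𝓝 (conj W₀)]
      fun w => conj (β + Ψ (conj w + α)) + 1 / 2 := by
    filter_upwards [(hO.preimage continuous_conj).mem_nhds (by simpa using hW₀)] with w hw
    simpa using heq _ hw
  exact (hlhs.analyticOnNhd hU).eqOn_of_preconnected_of_eventuallyEq (hrhs.analyticOnNhd hU)
    hUconn (conj_mem_reflection_domain (hdom W₀ hW₀)) hloc

lemma sub_self_eq_conj_sub_self_add_of_reflection_eq {Ψ : ℂ → ℂ} {α β w : ℂ}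
    (h : Ψ (w + 1 / 2) = conj (β + Ψ (conj w + α)) + 1 / 2) :
    Ψ (w + 1 / 2) - (w + 1 / 2) = conj (Ψ (conj w + α) - (conj w + α)) + conj (α + β) := by
  rw [h]
  simp only [map_add, map_sub, conj_conj]
  ring

lemma coeff_zero_eq_conj_add {Ψ : ℂ → ℂ} {S : Set ℂ} {c : ℤ → ℂ}
    (hsum : ∀ W ∈ S, HasSum (fun n : ℤ => c n * exp (2 * π * I * n * W)) (Ψ W - W))
    {z₁ z₂ K : ℂ} (h₁ : ∀ t : ℝ, z₁ + t ∈ S) (h₂ : ∀ t : ℝ, z₂ + t ∈ S)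
    (heq : ∀ t : ℝ, Ψ (z₁ + t) - (z₁ + t) = conj (Ψ (z₂ + t) - (z₂ + t)) + K) :
    c 0 = conj (c 0) + K := by
  have hsum₁ := fun t => hsum _ (h₁ t)
  have hsum₂ := fun t => hsum _ (h₂ t)
  have hint : IntervalIntegrable (fun t : ℝ => conj (Ψ (z₂ + t) - (z₂ + t))) volume 0 1 :=
    (continuous_conj.comp (continuous_of_hasSum_fourier_line hsum₂)).intervalIntegrable 0 1
  calc c 0 = ∫ t in (0 : ℝ)..1, (Ψ (z₁ + t) - (z₁ + t)) :=
        (intervalIntegral_eq_coeff_zero_of_hasSum_fourier_line hsum₁).symm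
    _ = ∫ t in (0 : ℝ)..1, (conj (Ψ (z₂ + t) - (z₂ + t)) + K) := by simp_rw [heq]
    _ = conj (∫ t in (0 : ℝ)..1, (Ψ (z₂ + t) - (z₂ + t))) + K := by
        rw [intervalIntegral.integral_add hint intervalIntegrable_const,
          intervalIntegral.intervalIntegral_conj]
        simp
    _ = conj (c 0) + K := by rw [intervalIntegral_eq_coeff_zero_of_hasSum_fourier_line hsum₂]

theorem glutsyuk_constant_term_general (b ε : ℝ) (a₁ a₂ : ℝ)
    (S : Set ℂ) (hS : S = {W : ℂ | a₁ < W.im ∧ W.im < a₂})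
    (Ψ : ℂ → ℂ) (hΨ : DifferentiableOn ℂ Ψ S)
    (c : ℤ → ℂ)
    (hsum : ∀ W ∈ S,
      HasSum (fun n : ℤ => c n * Complex.exp (2 * (Real.pi : ℂ) * Complex.I * (n : ℂ) * W))
        (Ψ W - W))
    (αp αm : ℂ)
    (hαp : αp = (Real.pi : ℂ) * Complex.I / (Real.sqrt ε : ℂ) +
      (Real.pi : ℂ) * Complex.I * (b : ℂ))
    (hαm : αm = -((Real.pi : ℂ) * Complex.I / (Real.sqrt ε : ℂ)) +
      (Real.pi : ℂ) * Complex.I * (b : ℂ))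
    (O : Set ℂ) (hO : IsOpen O) (hOne : O.Nonempty)
    (hdom : ∀ W ∈ O, W + αp ∈ S ∧ (starRingEnd ℂ) W + 1 / 2 ∈ S)
    (heq : ∀ W ∈ O,
      Ψ ((starRingEnd ℂ) W + 1 / 2) = (starRingEnd ℂ) (αm + Ψ (W + αp)) + 1 / 2) :
    (c 0).im = -(Real.pi * b) := by
  obtain ⟨W₀, hW₀⟩ := hOne
  obtain rfl : S = im ⁻¹' Ioo a₁ a₂ := hS
  have hreflect := reflection_eq_of_eqOn_open hΨ hO hW₀ hdom heq
  have hc : c 0 = conj (c 0) + conj (αp + αm) := by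
    refine coeff_zero_eq_conj_add hsum (z₁ := conj W₀ + 1 / 2) (z₂ := W₀ + αp)
      (fun t => mem_im_preimage_add_ofReal t (hdom W₀ hW₀).2)
      (fun t => mem_im_preimage_add_ofReal t (hdom W₀ hW₀).1) fun t => ?_
    have := sub_self_eq_conj_sub_self_add_of_reflection_eq (hreflect _
      (mem_im_preimage_add_ofReal t (conj_mem_reflection_domain (hdom W₀ hW₀))))
    rwa [map_add (starRingEnd ℂ) (conj W₀), conj_conj, conj_ofReal, add_right_comm W₀,
      add_right_comm (conj W₀)] at this
  have hα : αp + αm = (2 * π * b : ℝ) * I := by rw [hαp, hαm]; push_cast; ring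
  have him := congrArg im hc
  rw [add_im, conj_im, hα, conj_im, mul_I_im, ofReal_re] at him
  linarith

/-- Glutsyuk case (`ε > 0`): let `α^± = ±iπ/√ε + iπb`, let `Ψ` be holomorphic on a
horizontal strip `S` with absolutely convergent expansion
`Ψ(W) = W + c₀ + Σ_{n ≠ 0} c_n e^{2πinW}`, and let `Ψ^U = Ψ`,
`Ψ^L = T_{α⁻} ∘ Ψ ∘ T_{α⁺}`. If the compatibility equation
`Ψ^U(conj W + 1/2) = conj (Ψ^L W) + 1/2` holds on a nonempty open set where both sides
are defined, then `Im c₀ = −πb`. -/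
theorem glutsyuk_constant_term (b ε : ℝ) (hε : 0 < ε) (a₁ a₂ : ℝ)
    (S : Set ℂ) (hS : S = {W : ℂ | a₁ < W.im ∧ W.im < a₂})
    (Ψ : ℂ → ℂ) (hΨ : DifferentiableOn ℂ Ψ S)
    (c : ℤ → ℂ)
    (hsum : ∀ W ∈ S,
      HasSum (fun n : ℤ => c n * Complex.exp (2 * (Real.pi : ℂ) * Complex.I * (n : ℂ) * W))
        (Ψ W - W))
    (αp αm : ℂ)
    (hαp : αp = (Real.pi : ℂ) * Complex.I / (Real.sqrt ε : ℂ) +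
      (Real.pi : ℂ) * Complex.I * (b : ℂ))
    (hαm : αm = -((Real.pi : ℂ) * Complex.I / (Real.sqrt ε : ℂ)) +
      (Real.pi : ℂ) * Complex.I * (b : ℂ))
    (O : Set ℂ) (hO : IsOpen O) (hOne : O.Nonempty)
    (hdom : ∀ W ∈ O, W + αp ∈ S ∧ (starRingEnd ℂ) W + 1 / 2 ∈ S)
    (heq : ∀ W ∈ O,
      Ψ ((starRingEnd ℂ) W + 1 / 2) = (starRingEnd ℂ) (αm + Ψ (W + αp)) + 1 / 2) :
    (c 0).im = -(Real.pi * b) :=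
  glutsyuk_constant_term_general b ε a₁ a₂ S hS Ψ hΨ c hsum αp αm hαp hαm O hO hOne hdom heq
end

section
/- Let M ∈ ℝ and let Ψ be a function on H_M = {W : Im W > M} of the form Ψ(W) = W + c_0 + Σ_{n=1}^∞ c_n e^{2πinW} (absolutely convergent on H_M), and suppose Ψ is not a translation, i.e. c_n ≠ 0 for some n ≥ 1. If m, m' ∈ ℂ are such that Im m ≥ 0 and Ψ(W + m) = Ψ(W) + m' for all W ∈ H_M, then m = m' and m is a rational real number; more precisely, n·m ∈ ℤ for every n ≥ 1 with c_n ≠ 0. -/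
open Complex Filter Topology FormalMultilinearSeries Function.Periodic
open scoped Real

/-!
Write `q = e^{2πiW}`. Subtracting the expansions of `Ψ(W + m)` and `Ψ(W)` and using
`Ψ(W + m) = Ψ(W) + m'` gives `(m - m') + Σ_{n ≥ 1} c_n (e^{2πinm} - 1) qⁿ = 0` for all `W` high
enough in the upper half-plane, hence for `q ≠ 0` arbitrarily close to `0`. By the
identity theorem every coefficient of this power series vanishes: `m = m'`, and `e^{2πinm} = 1`,
i.e. `n m ∈ ℤ`, whenever `c_n ≠ 0`.
-/

theorem eq_zero_of_frequently_hasSum_mul_pow_eq_zero {𝕜 : Type*} [NontriviallyNormedField 𝕜]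
    [CompleteSpace 𝕜] {d : ℕ → 𝕜}
    (h : ∃ᶠ z in 𝓝[≠] (0 : 𝕜), HasSum (fun n => d n * z ^ n) 0) : d = 0 := by
  set p := ofScalars 𝕜 d
  obtain ⟨z₀, hsum₀, hz₀⟩ := (h.and_eventually self_mem_nhdsWithin).exists
  have hrad : (‖z₀‖₊ : ENNReal) ≤ p.radius :=
    p.le_radius_of_tendsto (l := 0) <| by
      simpa [p, ofScalars_norm] using hsum₀.summable.tendsto_atTop_zero.norm
  have hp : HasFPowerSeriesAt p.sum p 0 :=
    (p.hasFPowerSeriesOnBall (lt_of_lt_of_le (by simpa using hz₀) hrad)).hasFPowerSeriesAt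
  have hzero : ∃ᶠ z in 𝓝[≠] 0, p.sum z = 0 := h.mono fun z hz => by
    change ofScalarsSum d z = 0
    simpa [ofScalars_sum_eq] using hz.tsum_eq
  exact (ofScalars_series_eq_zero 𝕜).1 <|
    hp.eq_zero_of_eventually (hp.analyticAt.frequently_zero_iff_eventually_zero.1 hzero)

theorem exists_int_eq_of_cexp_two_pi_I_mul_eq_one {x : ℂ} (h : cexp (2 * π * I * x) = 1) :
    ∃ k : ℤ, x = k := by
  obtain ⟨k, hk⟩ := exp_eq_one_iff.1 h
  refine ⟨k, mul_left_cancel₀ (by simp [Real.pi_ne_zero, I_ne_zero] : 2 * (π : ℂ) * I ≠ 0) ?_⟩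
  linear_combination hk

theorem cexp_two_pi_I_mul_nat_mul (n : ℕ) (W : ℂ) :
    cexp (2 * π * I * n * W) = qParam 1 W ^ n := by
  rw [qParam, ← exp_nat_mul]
  congr 1
  push_cast
  ring

/-- The coefficients of `Ψ(W + m) - Ψ(W) - m'` as a power series in `q = e^{2πiW}`. -/
noncomputable def shiftCoeff (c : ℕ → ℂ) (m m' : ℂ) : ℕ → ℂ
  | 0 => m - m'
  | n + 1 => c (n + 1) * (cexp (2 * π * I * (n + 1) * m) - 1)

theorem hasSum_shiftCoeff_mul_qParam_pow {Ψ : ℂ → ℂ} {c : ℕ → ℂ} {m m' W : ℂ}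
    (hW : HasSum (fun n : ℕ => c (n + 1) * cexp (2 * π * I * ((n : ℂ) + 1) * W)) (Ψ W - W - c 0))
    (hWm : HasSum (fun n : ℕ => c (n + 1) * cexp (2 * π * I * ((n : ℂ) + 1) * (W + m)))
      (Ψ (W + m) - (W + m) - c 0))
    (hcom : Ψ (W + m) = Ψ W + m') :
    HasSum (fun n => shiftCoeff c m m' n * qParam 1 W ^ n) 0 := by
  have hdiff := hWm.sub hW
  rw [hcom, show Ψ W + m' - (W + m) - c 0 - (Ψ W - W - c 0) = 0 - (m - m') by ring] at hdiff
  refine (hasSum_nat_add_iff' 1).1 ?_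
  convert hdiff using 2 with n
  · have hsplit : ∀ x : ℂ, cexp (2 * π * I * ((n : ℂ) + 1) * x) = qParam 1 x ^ (n + 1) := by
      intro x
      exact_mod_cast cexp_two_pi_I_mul_nat_mul (n + 1) x
    rw [mul_add (2 * π * I * ((n : ℂ) + 1)) W m, exp_add, hsplit, shiftCoeff]
    ring
  · simp [shiftCoeff]

theorem exists_int_nat_mul_eq_of_shiftCoeff_eq_zero {c : ℕ → ℂ} {m m' : ℂ}
    (hd : shiftCoeff c m m' = 0) :
    ∀ n : ℕ, 1 ≤ n → c n ≠ 0 → ∃ k : ℤ, (n : ℂ) * m = (k : ℂ) := by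
  rintro (_ | n) hn hc
  · omega
  have hexp := congrFun hd (n + 1)
  simp only [shiftCoeff, Pi.zero_apply, mul_eq_zero, hc, sub_eq_zero, false_or] at hexp
  push_cast
  exact exists_int_eq_of_cexp_two_pi_I_mul_eq_one (by rw [← mul_assoc]; exact hexp)

theorem symmetry_lemma_general (M : ℝ) (Ψ : ℂ → ℂ) (c : ℕ → ℂ)
    (hsum : ∀ W : ℂ, M < W.im →
      HasSum (fun n : ℕ =>
          c (n + 1) * Complex.exp (2 * (Real.pi : ℂ) * Complex.I * ((n : ℂ) + 1) * W))
        (Ψ W - W - c 0))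
    (hne : ∃ n : ℕ, 1 ≤ n ∧ c n ≠ 0)
    (m m' : ℂ)
    (hcom : ∀ W : ℂ, M < W.im → Ψ (W + m) = Ψ W + m') :
    m = m' ∧ m.im = 0 ∧ (∃ q : ℚ, m = (q : ℂ)) ∧
    (∀ n : ℕ, 1 ≤ n → c n ≠ 0 → ∃ k : ℤ, (n : ℂ) * m = (k : ℂ)) := by
  have : (comap im atTop).NeBot := NeBot.comap_of_surj atTop_neBot im_surjective
  have hfreq : ∃ᶠ q in 𝓝[≠] 0, HasSum (fun n => shiftCoeff c m m' n * q ^ n) 0 := by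
    refine (qParam_tendsto one_pos).frequently (Eventually.frequently ?_)
    filter_upwards [tendsto_comap.eventually (eventually_gt_atTop M),
      tendsto_comap.eventually (eventually_gt_atTop (M - m.im))] with W hW hWm
    exact hasSum_shiftCoeff_mul_qParam_pow (hsum W hW)
      (hsum (W + m) (by simp only [add_im]; linarith)) (hcom W hW)
  have hd := eq_zero_of_frequently_hasSum_mul_pow_eq_zero hfreq
  have hint := exists_int_nat_mul_eq_of_shiftCoeff_eq_zero hd
  obtain ⟨n, hn, hc⟩ := hne
  obtain ⟨k, hk⟩ := hint n hn hc
  have hmq : m = ((k / n : ℚ) : ℂ) := by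
    push_cast
    rw [eq_div_iff (by exact_mod_cast (show n ≠ 0 by omega)), ← hk, mul_comm]
  refine ⟨sub_eq_zero.1 (congrFun hd 0), by rw [hmq]; exact ofReal_im _, ⟨_, hmq⟩, hint⟩

/-- Symmetry lemma: if `Ψ(W) = W + c₀ + Σ_{n≥1} c_n e^{2πinW}` on `{Im W > M}` is not a
translation (some `c_n ≠ 0`, `n ≥ 1`) and `Ψ(W + m) = Ψ(W) + m'` with `Im m ≥ 0`, then
`m = m'`, `m` is a rational real number, and `n·m ∈ ℤ` for every `n ≥ 1` with
`c_n ≠ 0`. -/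
theorem symmetry_lemma (M : ℝ) (Ψ : ℂ → ℂ) (c : ℕ → ℂ)
    (hsum : ∀ W : ℂ, M < W.im →
      HasSum (fun n : ℕ =>
          c (n + 1) * Complex.exp (2 * (Real.pi : ℂ) * Complex.I * ((n : ℂ) + 1) * W))
        (Ψ W - W - c 0))
    (hne : ∃ n : ℕ, 1 ≤ n ∧ c n ≠ 0)
    (m m' : ℂ) (him : 0 ≤ m.im)
    (hcom : ∀ W : ℂ, M < W.im → Ψ (W + m) = Ψ W + m') :
    m = m' ∧ m.im = 0 ∧ (∃ q : ℚ, m = (q : ℂ)) ∧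
    (∀ n : ℕ, 1 ≤ n → c n ≠ 0 → ∃ k : ℤ, (n : ℂ) * m = (k : ℂ)) :=
  symmetry_lemma_general M Ψ c hsum hne m m' hcom
end
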